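/- Score of the Gaussian-smoothed density as a posterior expectation (Tweedie-type identity). Let p : ℝ^n → [0, ∞) be a Lebesgue-measurable probability density (∫ p dx = 1), let σ > 0, let φ_σ(u) := (2πσ²)^{−n/2}·exp(−‖u‖²/(2σ²)), and let q_σ(y) := ∫ p(x)·φ_σ(y − x) dx. Then for every y ∈ ℝ^n, q_σ(y) > 0, the function log q_σ is differentiable at y, and ∇ log q_σ(y) = (1/q_σ(y)) · ∫ p(x)·((x − y)/σ²)·φ_σ(y − x) dx; that is, the score of the smoothed density equals the conditional expectation of ∇_y log φ_σ(y − x) = (x − y)/σ² given the noisy observation y. -/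

import Mathlib

open MeasureTheory

/-- The density of a centered Gaussian `N(0, σ² I)` on `ℝⁿ`. -/
noncomputable def gaussianKernel (n : ℕ) (σ : ℝ) (u : EuclideanSpace ℝ (Fin n)) : ℝ :=
  (2 * Real.pi * σ ^ 2) ^ (-(n : ℝ) / 2) * Real.exp (-‖u‖ ^ 2 / (2 * σ ^ 2))

/-- The Gaussian-smoothed density `q_σ = p * φ_σ`. -/
noncomputable def smoothedDensity (n : ℕ) (σ : ℝ) (p : EuclideanSpace ℝ (Fin n) → ℝ)
    (y : EuclideanSpace ℝ (Fin n)) : ℝ :=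
  ∫ x, p x * gaussianKernel n σ (y - x)

/-! Both `φ_σ` and its gradient `-(φ_σ(u)/σ²) • u` are bounded (because `t e^{-t²/(2σ²)} ≤ σ`), so
for integrable `p` one may differentiate `q_σ(y) = ∫ p(x) φ_σ(y - x) dx` under the integral sign by
dominated convergence. As `φ_σ > 0` and `p` has positive mass, `q_σ(y) > 0`, and the chain rule for
`log` divides the gradient by `q_σ(y)`. -/

open InnerProductSpace

theorem integral_mul_pos_of_integral_pos {α : Type*} [MeasurableSpace α] {μ : Measure α}
    {f g : α → ℝ} {C : ℝ} (hf0 : ∀ x, 0 ≤ f x) (hf : 0 < ∫ x, f x ∂μ) (hg0 : ∀ x, 0 < g x)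
    (hgm : AEStronglyMeasurable g μ) (hgC : ∀ x, g x ≤ C) :
    0 < ∫ x, f x * g x ∂μ := by
  have hfi : Integrable f μ := Integrable.of_integral_ne_zero hf.ne'
  have hfgi : Integrable (fun x => f x * g x) μ :=
    hfi.mul_bdd hgm (ae_of_all _ fun x => by rw [Real.norm_of_nonneg (hg0 x).le]; exact hgC x)
  have hsupp : Function.support (fun x => f x * g x) = Function.support f := by
    ext x; simp [(hg0 x).ne']
  rw [integral_pos_iff_support_of_nonneg hf0 hfi] at hf
  rwa [integral_pos_iff_support_of_nonneg (fun x => mul_nonneg (hf0 x) (hg0 x).le) hfgi, hsupp]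

section Gradient

variable {E : Type*} [NormedAddCommGroup E] [InnerProductSpace ℝ E] [CompleteSpace E]

theorem HasGradientAt.log {f : E → ℝ} {f' x : E} (hf : HasGradientAt f f' x) (hx : f x ≠ 0) :
    HasGradientAt (fun y => Real.log (f y)) ((f x)⁻¹ • f') x := by
  rw [hasGradientAt_iff_hasFDerivAt] at hf ⊢
  refine ((Real.hasDerivAt_log hx).comp_hasFDerivAt x hf).congr_fderiv ?_
  ext v
  simp

variable [SecondCountableTopology E] [MeasurableSpace E] [OpensMeasurableSpace E]
  {μ : Measure E}

theorem hasGradientAt_integral_mul_comp_sub {p K : E → ℝ} {G : E → E} {A B : ℝ}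
    (hp : Integrable p μ) (hK : ∀ u, HasGradientAt K (G u) u) (hG : Continuous G)
    (hKA : ∀ u, ‖K u‖ ≤ A) (hGB : ∀ u, ‖G u‖ ≤ B) (y : E) :
    HasGradientAt (fun y => ∫ x, p x * K (y - x) ∂μ) (∫ x, p x • G (y - x) ∂μ) y := by
  have hK_cont : Continuous K := continuous_iff_continuousAt.2 fun u => (hK u).continuousAt
  set F' : E → E → StrongDual ℝ E := fun y' x => p x • toDual ℝ E (G (y' - x))
  have hF'_meas (y' : E) : AEStronglyMeasurable (F' y') μ :=
    hp.aestronglyMeasurable.smul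
      ((toDual ℝ E).continuous.comp (hG.comp (continuous_sub_left y'))).aestronglyMeasurable
  have hF'_le (y' x : E) : ‖F' y' x‖ ≤ B * ‖p x‖ := by
    rw [norm_smul, LinearIsometryEquiv.norm_map, mul_comm]
    exact mul_le_mul_of_nonneg_right (hGB _) (norm_nonneg _)
  have hF'_int : Integrable (F' y) μ :=
    (hp.norm.const_mul B).mono' (hF'_meas y) (ae_of_all _ (hF'_le y))
  have hderiv : HasFDerivAt (fun y => ∫ x, p x * K (y - x) ∂μ) (∫ x, F' y x ∂μ) y := by
    refine hasFDerivAt_integral_of_dominated_of_fderiv_le (bound := fun x => B * ‖p x‖)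
      Filter.univ_mem
      (Filter.Eventually.of_forall fun y' =>
        hp.aestronglyMeasurable.mul (hK_cont.comp (continuous_sub_left y')).aestronglyMeasurable)
      (hp.mul_bdd (hK_cont.comp (continuous_sub_left y)).aestronglyMeasurable
        (ae_of_all _ fun _ => hKA _))
      (hF'_meas y) (ae_of_all _ fun x y' _ => hF'_le y' x) (hp.norm.const_mul B)
      (ae_of_all _ fun x y' _ => ?_)
    have hK' :=
      ((hK (y' - x)).hasFDerivAt.comp y' ((hasFDerivAt_id y').sub_const x)).const_mul (p x)
    exact hK'.congr_fderiv (by ext v; simp [F'])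
  rw [hasGradientAt_iff_hasFDerivAt]
  refine hderiv.congr_fderiv ?_
  ext v
  have hpG : Integrable (fun x => p x • G (y - x)) μ :=
    hp.smul_bdd B (hG.comp (continuous_sub_left y)).aestronglyMeasurable
      (ae_of_all _ fun _ => hGB _)
  rw [ContinuousLinearMap.integral_apply hF'_int, toDual_apply_apply, real_inner_comm,
    ← integral_inner hpG]
  simp [F', toDual_apply_apply, real_inner_smul_right, real_inner_comm]

end Gradient

theorem mul_exp_neg_sq_div_le {σ : ℝ} (hσ : 0 < σ) (t : ℝ) :
    t * Real.exp (-t ^ 2 / (2 * σ ^ 2)) ≤ σ := by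
  rw [neg_div, Real.exp_neg, ← div_eq_mul_inv, div_le_iff₀ (Real.exp_pos _)]
  calc t ≤ σ * (t ^ 2 / (2 * σ ^ 2) + 1) := by
        rw [← sub_nonneg]
        have : σ * (t ^ 2 / (2 * σ ^ 2) + 1) - t = (t - σ) ^ 2 / (2 * σ) + σ / 2 := by
          field_simp; ring
        rw [this]; positivity
    _ ≤ σ * Real.exp (t ^ 2 / (2 * σ ^ 2)) := by gcongr; exact Real.add_one_le_exp _

section GaussianKernel

variable {n : ℕ} {σ : ℝ}

theorem gaussianKernel_pos (hσ : 0 < σ) (u : EuclideanSpace ℝ (Fin n)) :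
    0 < gaussianKernel n σ u := by
  unfold gaussianKernel; positivity

theorem gaussianKernel_le (u : EuclideanSpace ℝ (Fin n)) :
    gaussianKernel n σ u ≤ (2 * Real.pi * σ ^ 2) ^ (-(n : ℝ) / 2) := by
  refine mul_le_of_le_one_right (by positivity) (Real.exp_le_one_iff.2 ?_)
  exact div_nonpos_of_nonpos_of_nonneg (by simp) (by positivity)

theorem continuous_gaussianKernel : Continuous (gaussianKernel n σ) := by
  unfold gaussianKernel; fun_prop

theorem hasGradientAt_gaussianKernel (u : EuclideanSpace ℝ (Fin n)) :
    HasGradientAt (gaussianKernel n σ) (-(gaussianKernel n σ u / σ ^ 2) • u) u := by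
  have hfun : gaussianKernel n σ = fun v =>
      (2 * Real.pi * σ ^ 2) ^ (-(n : ℝ) / 2) * Real.exp (-(2 * σ ^ 2)⁻¹ * ‖v‖ ^ 2) := by
    ext v; unfold gaussianKernel; ring_nf
  have h := (((hasStrictFDerivAt_norm_sq u).hasFDerivAt.const_mul (-(2 * σ ^ 2)⁻¹)).exp).const_mul
    ((2 * Real.pi * σ ^ 2) ^ (-(n : ℝ) / 2))
  rw [hasGradientAt_iff_hasFDerivAt, hfun]
  refine h.congr_fderiv ?_
  ext v
  simp only [mul_inv_rev, neg_mul, neg_smul, smul_neg, neg_apply, smul_apply, coe_innerSL_apply,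
    nsmul_eq_mul, Nat.cast_ofNat, smul_eq_mul, map_neg, map_smul,
    toDual_apply_apply, neg_inj]
  ring

theorem norm_neg_gaussianKernel_smul_le (hσ : 0 < σ) (u : EuclideanSpace ℝ (Fin n)) :
    ‖-(gaussianKernel n σ u / σ ^ 2) • u‖ ≤ (2 * Real.pi * σ ^ 2) ^ (-(n : ℝ) / 2) / σ := by
  rw [norm_smul, norm_neg, Real.norm_of_nonneg (by have := gaussianKernel_pos hσ u; positivity)]
  have := mul_exp_neg_sq_div_le hσ ‖u‖
  calc gaussianKernel n σ u / σ ^ 2 * ‖u‖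
      = (2 * Real.pi * σ ^ 2) ^ (-(n : ℝ) / 2) * (‖u‖ * Real.exp (-‖u‖ ^ 2 / (2 * σ ^ 2))) /
          σ ^ 2 := by
        unfold gaussianKernel; ring
    _ ≤ (2 * Real.pi * σ ^ 2) ^ (-(n : ℝ) / 2) * σ / σ ^ 2 := by gcongr
    _ = _ := by field_simp

end GaussianKernel

theorem smoothed_density_score_general {n : ℕ}
    (p : EuclideanSpace ℝ (Fin n) → ℝ)
    (hp0 : ∀ x, 0 ≤ p x)
    (hp1 : ∫ x, p x = 1)
    (σ : ℝ) (hσ : 0 < σ) :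
    ∀ y : EuclideanSpace ℝ (Fin n),
      0 < smoothedDensity n σ p y ∧
      DifferentiableAt ℝ (fun y' => Real.log (smoothedDensity n σ p y')) y ∧
      gradient (fun y' => Real.log (smoothedDensity n σ p y')) y =
        (smoothedDensity n σ p y)⁻¹ •
          ∫ x, (p x * gaussianKernel n σ (y - x) / σ ^ 2) • (x - y) := by
  intro y
  have hq_pos : 0 < smoothedDensity n σ p y :=
    integral_mul_pos_of_integral_pos hp0 (by rw [hp1]; exact one_pos)
      (fun _ => gaussianKernel_pos hσ _)
      (continuous_gaussianKernel.comp (continuous_sub_left y)).aestronglyMeasurable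
      (fun _ => gaussianKernel_le _)
  have hgrad_cont : Continuous fun u : EuclideanSpace ℝ (Fin n) =>
      -(gaussianKernel n σ u / σ ^ 2) • u :=
    (continuous_gaussianKernel.div_const _).neg.smul continuous_id
  have hq : HasGradientAt (smoothedDensity n σ p)
      (∫ x, p x • -(gaussianKernel n σ (y - x) / σ ^ 2) • (y - x)) y :=
    hasGradientAt_integral_mul_comp_sub (K := gaussianKernel n σ)
      (Integrable.of_integral_ne_zero (by simp [hp1])) hasGradientAt_gaussianKernel hgrad_cont
      (fun u => (Real.norm_of_nonneg (gaussianKernel_pos hσ u).le).trans_le (gaussianKernel_le u))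
      (norm_neg_gaussianKernel_smul_le hσ) y
  have hlog := hq.log hq_pos.ne'
  refine ⟨hq_pos, hlog.differentiableAt, hlog.gradient.trans ?_⟩
  congr 2
  funext x
  rw [smul_smul, mul_neg, neg_smul, ← smul_neg, neg_sub, mul_div_assoc]

/-- Score of the Gaussian-smoothed density as a posterior expectation (Tweedie-type
identity): for a probability density `p` on `ℝⁿ` and `σ > 0`, at every `y` the smoothed
density `q_σ(y)` is positive, `log q_σ` is differentiable at `y`, and
`∇ log q_σ(y) = (1/q_σ(y)) ∫ p(x) ((x - y)/σ²) φ_σ(y - x) dx`. -/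
theorem smoothed_density_score {n : ℕ}
    (p : EuclideanSpace ℝ (Fin n) → ℝ)
    (hpm : Measurable p) (hp0 : ∀ x, 0 ≤ p x)
    (hp1 : ∫ x, p x = 1)
    (σ : ℝ) (hσ : 0 < σ) :
    ∀ y : EuclideanSpace ℝ (Fin n),
      0 < smoothedDensity n σ p y ∧
      DifferentiableAt ℝ (fun y' => Real.log (smoothedDensity n σ p y')) y ∧
      gradient (fun y' => Real.log (smoothedDensity n σ p y')) y =
        (smoothedDensity n σ p y)⁻¹ •
          ∫ x, (p x * gaussianKernel n σ (y - x) / σ ^ 2) • (x - y) :=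
  smoothed_density_score_general p hp0 hp1 σ hσ
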